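/- arXiv:math/0302111 — 2 statements merged into one kernel-verified Lean document; each statement's English description precedes it below -/
import Mathlib

section
/- Let X be a tree with vertex set V, let L : ℤ → V be a geodesic line, and let Γ be a group of automorphisms of X such that the stabilizer {γ ∈ Γ : γ(L(0)) = L(0)} is finite. Suppose h ∈ Γ satisfies h(L(n)) = L(n + ℓ) for all n ∈ ℤ with ℓ ≥ 1, and u ∈ Γ fixes pointwise the horoellipse E = {v ∈ V : ∃ t ∈ ℕ, 3·dist(v, L(−t)) ≤ t}. Then u fixes every vertex of X, i.e. u(v) = v for all v ∈ V. -/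
private lemma iso_dist_le {V : Type*} {G : SimpleGraph V} (hconn : G.Connected)
    (f : G ≃g G) (a b : V) : G.dist (f a) (f b) ≤ G.dist a b := by
  obtain ⟨p, hp⟩ := (hconn a b).exists_walk_length_eq_dist
  calc G.dist (f a) (f b) ≤ (p.map f.toHom).length := SimpleGraph.dist_le _
    _ = G.dist a b := by rw [SimpleGraph.Walk.length_map, hp]

private lemma iso_dist {V : Type*} {G : SimpleGraph V} (hconn : G.Connected)
    (f : G ≃g G) (a b : V) : G.dist (f a) (f b) = G.dist a b := by
  refine le_antisymm (iso_dist_le hconn f a b) ?_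
  have := iso_dist_le hconn f.symm (f a) (f b)
  simpa using this

/-- If a group `Γ` of automorphisms of a tree has finite stabilizer of the vertex `L 0`,
contains a hyperbolic element `h` translating along the geodesic line `L` by `ℓ ≥ 1`, and
contains an element `u` fixing pointwise the horoellipse of eccentricity `1/3` centered at
the end `L(-∞)`, then `u` is the identity on the vertices. -/
theorem stmt_4 {V : Type*} (G : SimpleGraph V) (hconn : G.Connected) (hacyc : G.IsAcyclic)
    (L : ℤ → V) (hL : ∀ i j : ℤ, G.dist (L i) (L j) = (i - j).natAbs)
    (Γ : Subgroup (G ≃g G))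
    (hstab : {γ : G ≃g G | γ ∈ Γ ∧ γ (L 0) = L 0}.Finite)
    (h : G ≃g G) (hhΓ : h ∈ Γ) (ℓ : ℤ) (hℓ : 1 ≤ ℓ)
    (hh : ∀ n : ℤ, h (L n) = L (n + ℓ))
    (u : G ≃g G) (huΓ : u ∈ Γ)
    (hu : ∀ v : V, (∃ t : ℕ, 3 * G.dist v (L (-(t : ℤ))) ≤ t) → u v = v) :
    ∀ v : V, u v = v := by
  -- the conjugates of `u` by powers of `h`
  set g : ℕ → G ≃g G := fun k => h ^ k * u * (h ^ k)⁻¹ with hg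
  -- powers of `h` translate along `L`
  have hpow : ∀ (k : ℕ) (n : ℤ), (h ^ k) (L n) = L (n + k * ℓ) := by
    intro k
    induction k with
    | zero => intro n; simp
    | succ k ih =>
      intro n
      rw [pow_succ', RelIso.mul_apply, ih, hh]
      congr 1
      push_cast
      ring
  have hpowinv : ∀ (k : ℕ) (n : ℤ), (h ^ k)⁻¹ (L n) = L (n - k * ℓ) := by
    intro k n
    have h1 : (h ^ k) (L (n - k * ℓ)) = L n := by rw [hpow]; ring_nf
    calc (h ^ k)⁻¹ (L n) = (h ^ k)⁻¹ ((h ^ k) (L (n - k * ℓ))) := by rw [h1]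
      _ = L (n - k * ℓ) := RelIso.inv_apply_self _ _
  have hℓt : (ℓ.toNat : ℤ) = ℓ := Int.toNat_of_nonneg (le_trans zero_le_one hℓ)
  -- each conjugate fixes the vertices near `L 0`
  have claim1 : ∀ (k : ℕ) (v : V), 3 * G.dist v (L 0) ≤ k * ℓ.toNat → (g k) v = v := by
    intro k v hv
    have hw : u ((h ^ k)⁻¹ v) = (h ^ k)⁻¹ v := by
      apply hu
      refine ⟨k * ℓ.toNat, ?_⟩
      have hcast : (-(((k * ℓ.toNat : ℕ)) : ℤ)) = 0 - (k : ℤ) * ℓ := by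
        push_cast [hℓt]; ring
      have hL0 : L (-(((k * ℓ.toNat : ℕ)) : ℤ)) = (h ^ k)⁻¹ (L 0) := by
        rw [hcast, ← hpowinv]
      rw [hL0, iso_dist hconn ((h ^ k)⁻¹) v (L 0)]
      exact hv
    show (h ^ k) (u ((h ^ k)⁻¹ v)) = v
    rw [hw, RelIso.apply_inv_self]
  -- each conjugate lies in the (finite) stabilizer of `L 0`
  have hmem : ∀ k : ℕ, g k ∈ {γ : G ≃g G | γ ∈ Γ ∧ γ (L 0) = L 0} := by
    intro k
    constructor
    · exact mul_mem (mul_mem (pow_mem hhΓ k) huΓ) (inv_mem (pow_mem hhΓ k))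
    · exact claim1 k (L 0) (by simp [SimpleGraph.dist_self])
  -- finiteness: two conjugates coincide
  have : ∃ k m : ℕ, k < m ∧ g k = g m := by
    have : Finite ↥{γ : G ≃g G | γ ∈ Γ ∧ γ (L 0) = L 0} := hstab.to_subtype
    obtain ⟨k, m, hkm, heq⟩ := Finite.exists_ne_map_eq_of_infinite
      (fun k : ℕ => (⟨g k, hmem k⟩ : ↥{γ : G ≃g G | γ ∈ Γ ∧ γ (L 0) = L 0}))
    have heq' : g k = g m := by simpa using congrArg Subtype.val heq
    rcases hkm.lt_or_gt with hlt | hlt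
    · exact ⟨k, m, hlt, heq'⟩
    · exact ⟨m, k, hlt, heq'.symm⟩
  obtain ⟨k, m, hkm, heq⟩ := this
  set d : ℕ := m - k with hd
  have hd1 : 1 ≤ d := Nat.le_sub_of_add_le (by omega)
  have hmd : h ^ m = h ^ k * h ^ d := by rw [← pow_add]; congr 1; omega
  -- `u` commutes with `h ^ d`
  have hud : h ^ d * u * (h ^ d)⁻¹ = u := by
    have : h ^ k * u * (h ^ k)⁻¹ = h ^ m * u * (h ^ m)⁻¹ := heq
    rw [hmd] at this
    have := congrArg (fun x => (h ^ k)⁻¹ * x * (h ^ k)) this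
    simpa [mul_assoc] using this.symm
  -- hence all `g (j * d)` equal `u`
  have hgu : ∀ j : ℕ, g (j * d) = u := by
    intro j
    induction j with
    | zero => simp [hg]
    | succ j ih =>
      have h2 : g ((j + 1) * d) = h ^ (j * d) * (h ^ d * u * (h ^ d)⁻¹) * (h ^ (j * d))⁻¹ := by
        rw [hg]
        simp only [add_mul, one_mul, pow_add, mul_inv_rev]
        group
      rw [h2, hud]
      exact ih
  -- conclude
  intro v
  set j : ℕ := 3 * G.dist v (L 0) with hj
  have hle : 3 * G.dist v (L 0) ≤ (j * d) * ℓ.toNat := by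
    have h1 : 1 ≤ ℓ.toNat := by omega
    calc 3 * G.dist v (L 0) = j * 1 * 1 := by rw [hj]; ring
      _ ≤ (j * d) * ℓ.toNat := by
        exact Nat.mul_le_mul (Nat.mul_le_mul_left j hd1) h1
  have := claim1 (j * d) v hle
  rwa [hgu j] at this
end

section
/- Let X be a tree with vertex set V, let c : ℕ → V be a geodesic ray, and let g, h be automorphisms of X each of which fixes the end of c, i.e. the images of c and g ∘ c have infinite intersection, and likewise for h. Let t(g), t(h), t(g∘h) denote the unique integers such that g(c(k)) = c(k + t(g)) for all sufficiently large k, and similarly for h and g∘h. Then t(g∘h) = t(g) + t(h); moreover t(g) = 0 if and only if g fixes some vertex of X, and in that case g fixes pointwise a tail of c. -/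
private lemma iso_dist_eq {V : Type*} {G : SimpleGraph V} (hconn : G.Connected)
    (g : G ≃g G) (a b : V) : G.dist (g a) (g b) = G.dist a b := by
  have le : ∀ (g : G ≃g G) (a b : V), G.dist (g a) (g b) ≤ G.dist a b := by
    intro g a b
    obtain ⟨p, hp⟩ := hconn.exists_walk_length_eq_dist a b
    calc G.dist (g a) (g b) ≤ (p.map g.toHom).length := SimpleGraph.dist_le _
      _ = p.length := by simp
      _ = G.dist a b := hp
  refine le_antisymm (le g a b) ?_
  have := le g.symm (g a) (g b)
  simpa using this

/-- The oriented length function with respect to an end is a homomorphism to `ℤ` on the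
stabilizer of the end, and its kernel consists of the elliptic elements: `t(g∘h) =
t(g) + t(h)`, and `t(g) = 0` iff `g` fixes some vertex, in which case `g` fixes a tail of
`c` pointwise. -/
theorem stmt_16 {V : Type*} (G : SimpleGraph V) (hconn : G.Connected) (hacyc : G.IsAcyclic)
    (c : ℕ → V) (hc : ∀ i j : ℕ, G.dist (c i) (c j) = ((i : ℤ) - (j : ℤ)).natAbs)
    (g h : G ≃g G)
    (hgfix : (Set.range c ∩ Set.range (⇑g ∘ c)).Infinite)
    (hhfix : (Set.range c ∩ Set.range (⇑h ∘ c)).Infinite)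
    (tg th tgh : ℤ)
    (htg : ∃ N : ℕ, ∀ k ≥ N, 0 ≤ (k : ℤ) + tg ∧ g (c k) = c ((k : ℤ) + tg).toNat)
    (hth : ∃ N : ℕ, ∀ k ≥ N, 0 ≤ (k : ℤ) + th ∧ h (c k) = c ((k : ℤ) + th).toNat)
    (htgh : ∃ N : ℕ, ∀ k ≥ N, 0 ≤ (k : ℤ) + tgh ∧ (g * h) (c k) = c ((k : ℤ) + tgh).toNat) :
    tgh = tg + th ∧
    (tg = 0 ↔ ∃ v : V, g v = v) ∧
    (tg = 0 → ∃ N : ℕ, ∀ k ≥ N, g (c k) = c k) := by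
  obtain ⟨Ng, hNg⟩ := htg
  obtain ⟨Nh, hNh⟩ := hth
  obtain ⟨Ngh, hNgh⟩ := htgh
  have cinj : Function.Injective c := by
    intro i j hij
    have := hc i j
    rw [hij, SimpleGraph.dist_self] at this
    omega
  constructor
  · -- tgh = tg + th
    set k : ℕ := max (max Nh Ngh) (Ng + th.natAbs) with hk
    obtain ⟨hth0, hthk⟩ := hNh k (by omega)
    set m : ℕ := ((k : ℤ) + th).toNat with hm
    have hmz : (m : ℤ) = (k : ℤ) + th := Int.toNat_of_nonneg hth0
    have hmN : Ng ≤ m := by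
      have : Ng + th.natAbs ≤ k := le_max_right _ _
      omega
    obtain ⟨htg0, htgk⟩ := hNg m hmN
    obtain ⟨htgh0, htghk⟩ := hNgh k (by omega)
    have hcomp : (g * h) (c k) = g (h (c k)) := rfl
    rw [hcomp, hthk, htgk] at htghk
    have := cinj htghk
    omega
  constructor
  · constructor
    · intro h0
      refine ⟨c Ng, ?_⟩
      have := (hNg Ng le_rfl).2
      rw [h0] at this
      simpa using this
    · rintro ⟨v, hv⟩
      by_contra h0
      -- key: distances to v are preserved along the shifted ray
      have key : ∀ k ≥ Ng, G.dist v (c (((k : ℤ) + tg).toNat)) = G.dist v (c k) := by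
        intro k hk
        obtain ⟨_, htgk⟩ := hNg k hk
        calc G.dist v (c (((k : ℤ) + tg).toNat)) = G.dist v (g (c k)) := by rw [htgk]
          _ = G.dist (g v) (g (c k)) := by rw [hv]
          _ = G.dist v (c k) := iso_dist_eq hconn g v (c k)
      set s : ℕ := tg.natAbs with hs
      have hs0 : 0 < s := by omega
      have per : ∀ m : ℕ, G.dist v (c (Ng + m * s)) = G.dist v (c Ng) := by
        intro m
        induction m with
        | zero => simp
        | succ n ih =>
          rcases lt_or_gt_of_ne h0 with hneg | hpos
          · have := key (Ng + (n + 1) * s) (by omega)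
            have hmul : (n + 1) * s = n * s + s := Nat.succ_mul n s
            have harg : (((Ng + (n + 1) * s : ℕ) : ℤ) + tg).toNat = Ng + n * s := by
              omega
            rw [harg] at this
            rw [← this, ih]
          · have := key (Ng + n * s) (by omega)
            have hmul : (n + 1) * s = n * s + s := Nat.succ_mul n s
            have harg : (((Ng + n * s : ℕ) : ℤ) + tg).toNat = Ng + (n + 1) * s := by
              omega
            rw [harg] at this
            rw [this, ih]
      have lower : ∀ k : ℕ, (k : ℤ) ≤ G.dist v (c k) + G.dist v (c 0) := by
        intro k
        have h1 : G.dist (c 0) (c k) = k := by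
          have := hc 0 k
          omega
        have h2 : G.dist (c 0) (c k) ≤ G.dist (c 0) v + G.dist v (c k) :=
          hconn.dist_triangle
        have h3 : G.dist (c 0) v = G.dist v (c 0) := SimpleGraph.dist_comm
        omega
      set m : ℕ := G.dist v (c Ng) + G.dist v (c 0) + 1 with hmdef
      have h1 := per m
      have h2 := lower (Ng + m * s)
      rw [h1] at h2
      have : m * s ≥ m := Nat.le_mul_of_pos_right m hs0
      omega
  · intro h0
    refine ⟨Ng, fun k hk => ?_⟩
    have := (hNg k hk).2
    rw [h0] at this
    simpa using this
end
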